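/- The map ε is a counit for Δ on kX_∞: for every w ∈ kX_∞, (ε⊗id)Δ(w) = 1_k ⊗ w in k ⊗ kX_∞ and (id⊗ε)Δ(w) = w ⊗ 1_k in kX_∞ ⊗ k. -/

import Mathlib

open TensorProduct

universe u v

/-- Letters of Rota-Baxter bracketed words: either a variable from `X` or a
bracketed word `⌊w⌋` (a list of letters). -/
inductive RBL (X : Type u) : Type u
  | var : X → RBL X
  | br : List (RBL X) → RBL X

namespace RBL

variable {X : Type u}

/-- `a.isBr = true` iff the letter `a` is a bracketed element `⌊w⌋ ∈ ⌊X_∞⌋`. -/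
def isBr : RBL X → Bool
  | var _ => false
  | br _ => true

mutual
  /-- Validity of a letter: the inside of a bracket must be a Rota-Baxter bracketed word. -/
  def valid : RBL X → Prop
    | var _ => True
    | br l => wordValid l
  /-- `wordValid l` says that the list of letters `l` is a Rota-Baxter bracketed word,
  i.e. all letters are valid and the letters alternate (no two consecutive brackets). -/
  def wordValid : List (RBL X) → Prop
    | [] => True
    | [a] => valid a
    | a :: b :: l => valid a ∧ ¬(a.isBr = true ∧ b.isBr = true) ∧ wordValid (b :: l)
end

lemma wordValid_nil : wordValid ([] : List (RBL X)) := by simp [wordValid]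

lemma wordValid_var (x : X) : wordValid [var x] := by simp [wordValid, valid]

lemma wordValid_br {l : List (RBL X)} (h : wordValid l) : wordValid [br l] := by
  simpa [wordValid, valid] using h

mutual
  /-- The total degree of a letter. -/
  def degL : RBL X → ℕ
    | var _ => 1
    | br l => degW l + 1
  /-- The total degree of a word: the number of occurrences of brackets (i.e. of `P`)
  plus the number of occurrences of letters of `X`. -/
  def degW : List (RBL X) → ℕ
    | [] => 0
    | a :: l => degL a + degW l
end

end RBL

/-- The set `X_∞` of Rota-Baxter bracketed words on `X`. -/
def RBWord (X : Type u) : Type u := {l : List (RBL X) // RBL.wordValid l}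

namespace RBWord

variable {X : Type u}

/-- The empty word `1`. -/
def one : RBWord X := ⟨[], RBL.wordValid_nil⟩

/-- The total degree of a Rota-Baxter bracketed word. -/
def deg (w : RBWord X) : ℕ := RBL.degW w.1

end RBWord

variable (k : Type v) [CommRing k] (X : Type u)

/-- The free `k`-module `kX_∞` on the Rota-Baxter bracketed words. -/
abbrev RBMod : Type max u v := RBWord X →₀ k

variable {X}

/-- A Rota-Baxter bracketed word viewed as a basis element of `kX_∞`. -/
noncomputable def sing (w : RBWord X) : RBMod k X := Finsupp.single w 1

variable (X)

/-- The Rota-Baxter operator `P` on `kX_∞`, sending a basis word `w` to `⌊w⌋`. -/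
noncomputable def Pop : RBMod k X →ₗ[k] RBMod k X :=
  Finsupp.lmapDomain k k fun w => (⟨[RBL.br w.1], RBL.wordValid_br w.2⟩ : RBWord X)

/-- Concatenation on the left by `u₀` and on the right by `v₀`, as a linear map on `kX_∞`
(sending basis words whose concatenation is not valid to `0`; in all uses below
the concatenations are valid). -/
noncomputable def concatLR (u₀ v₀ : List (RBL X)) : RBMod k X →ₗ[k] RBMod k X :=
  Finsupp.lsum k fun w =>
    letI := Classical.dec (RBL.wordValid (u₀ ++ w.1 ++ v₀))
    if h : RBL.wordValid (u₀ ++ w.1 ++ v₀) then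
      Finsupp.lsingle (⟨u₀ ++ w.1 ++ v₀, h⟩ : RBWord X) else 0

/-- The counit `ε : kX_∞ → k`, `ε(1) = 1` and `ε(w) = 0` for basis words `w ≠ 1`. -/
noncomputable def eps : RBMod k X →ₗ[k] k := Finsupp.lapply RBWord.one

/-- The homogeneous component `H^(n)` of `kX_∞`: the span of the basis words of total
degree `n`. -/
noncomputable def Hdeg (n : ℕ) : Submodule k (RBMod k X) :=
  Finsupp.supported k k {w : RBWord X | w.deg = n}

variable (lam : k)

/-- The data of the product `⋄` on the free Rota-Baxter algebra `kX_∞` of weight `lam`,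
together with its recursive defining equations:
* if the concatenation of `u` and `v` is again a Rota-Baxter bracketed word (in particular
  if `u` or `v` is empty, or if the last letter of `u` or the first letter of `v` is a
  variable), then `u ⋄ v` is the concatenation `uv`;
* if `u = u₀⌊ā⌋` and `v = ⌊b̄⌋v₀`, then
  `u ⋄ v = u₀(⌊⌊ā⌋ ⋄ b̄⌋ + ⌊ā ⋄ ⌊b̄⌋⌋ + λ⌊ā ⋄ b̄⌋)v₀`. -/
structure FreeRBAData where
  /-- the product `⋄`, as a `k`-bilinear map -/
  d : RBMod k X →ₗ[k] RBMod k X →ₗ[k] RBMod k X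
  d_concat : ∀ (u v : RBWord X) (h : RBL.wordValid (u.1 ++ v.1)),
    d (sing k u) (sing k v) = sing k ⟨u.1 ++ v.1, h⟩
  d_br : ∀ (u₀ v₀ : List (RBL X)) (a b : RBWord X)
    (hu : RBL.wordValid (u₀ ++ [RBL.br a.1])) (hv : RBL.wordValid (RBL.br b.1 :: v₀)),
    d (sing k ⟨u₀ ++ [RBL.br a.1], hu⟩) (sing k ⟨RBL.br b.1 :: v₀, hv⟩)
      = concatLR k X u₀ v₀
          (Pop k X (d (Pop k X (sing k a)) (sing k b))
            + Pop k X (d (sing k a) (Pop k X (sing k b)))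
            + lam • Pop k X (d (sing k a) (sing k b)))

namespace FreeRBAData

variable {k X lam}

/-- The componentwise product `⋄ ⊗ ⋄` on `kX_∞ ⊗ kX_∞`. -/
noncomputable def mulT (D : FreeRBAData k X lam) :
    (RBMod k X ⊗[k] RBMod k X) →ₗ[k] (RBMod k X ⊗[k] RBMod k X) →ₗ[k]
      (RBMod k X ⊗[k] RBMod k X) :=
  TensorProduct.map₂ D.d D.d

end FreeRBAData

/-- The free Rota-Baxter algebra `kX_∞` of weight `lam` together with the coproduct `Δ`,
characterized by its recursive defining equations:
`Δ(1) = 1 ⊗ 1`, `Δ(x) = x ⊗ 1 + 1 ⊗ x` for `x ∈ X`,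
`Δ(⌊w⌋) = ⌊w⌋ ⊗ 1 + (id ⊗ P)Δ(w)`, and
`Δ(w₁ ⋄ ⋯ ⋄ w_m) = Δ(w₁) ⋄ ⋯ ⋄ Δ(w_m)` for the `⋄`-factorization of a word into its
(alternating) sequence of letters. -/
structure FreeRBBialgData extends FreeRBAData k X lam where
  /-- the coproduct `Δ` -/
  Dl : RBMod k X →ₗ[k] (RBMod k X ⊗[k] RBMod k X)
  Dl_one : Dl (sing k RBWord.one) = sing k RBWord.one ⊗ₜ[k] sing k RBWord.one
  Dl_var : ∀ (x : X),
    Dl (sing k ⟨[RBL.var x], RBL.wordValid_var x⟩)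
      = sing k ⟨[RBL.var x], RBL.wordValid_var x⟩ ⊗ₜ[k] sing k RBWord.one
        + sing k RBWord.one ⊗ₜ[k] sing k ⟨[RBL.var x], RBL.wordValid_var x⟩
  Dl_br : ∀ w : RBWord X,
    Dl (Pop k X (sing k w))
      = Pop k X (sing k w) ⊗ₜ[k] sing k RBWord.one
        + TensorProduct.map LinearMap.id (Pop k X) (Dl (sing k w))
  Dl_cons : ∀ (a : RBL X) (l : List (RBL X)) (h : RBL.wordValid (a :: l))
    (ha : RBL.wordValid [a]) (hl : RBL.wordValid l), l ≠ [] →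
    Dl (sing k ⟨a :: l, h⟩)
      = TensorProduct.map₂ d d (Dl (sing k ⟨[a], ha⟩)) (Dl (sing k ⟨l, hl⟩))

namespace RBL

variable {X : Type u}

lemma wordValid_map_var (s : List X) : wordValid (s.map RBL.var) := by
  induction s with
  | nil => exact wordValid_nil
  | cons a t ih =>
    cases t with
    | nil => exact wordValid_var a
    | cons b t' =>
      simp only [List.map_cons] at ih ⊢
      exact ⟨by simp [valid], by simp [isBr], ih⟩

end RBL

variable {X}

/-- The word `x₁ ⋯ x_m ∈ M(X)` as a basis element of `kX_∞`. -/
noncomputable def varWord (s : List X) : RBMod k X :=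
  sing k ⟨s.map RBL.var, RBL.wordValid_map_var s⟩

/-- A letter in `X ∪ ⌊X_∞⌋`, viewed as a basis element of `kX_∞` (invalid letters are
sent to `0`; they do not occur below). -/
noncomputable def letterMod (a : RBL X) : RBMod k X :=
  letI := Classical.dec (RBL.wordValid [a])
  if h : RBL.wordValid [a] then sing k ⟨[a], h⟩ else 0

variable (X)

/-- The tensor product `H^(p) ⊗ H^(q)` of homogeneous components, as a submodule of
`kX_∞ ⊗ kX_∞`. -/
noncomputable def HdegT (p q : ℕ) : Submodule k (RBMod k X ⊗[k] RBMod k X) :=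
  Submodule.map₂ (TensorProduct.mk k (RBMod k X) (RBMod k X)) (Hdeg k X p) (Hdeg k X q)

namespace FreeRBAData

variable {k X lam}

/-- The `⋄`-product `w₁ ⋄ (w₂ ⋄ (⋯ ⋄ (w_m ⋄ 1)))` of a sequence of letters. -/
noncomputable def prodList (D : FreeRBAData k X lam) (l : List (RBL X)) : RBMod k X :=
  l.foldr (fun a acc => D.d (letterMod k a) acc) (sing k RBWord.one)

end FreeRBAData

/-! The counit `ε` is multiplicative for `⋄`: a product of two nonempty words is either their
concatenation or, when both meet in brackets, a combination of words `u₀⌊…⌋v₀`; neither is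
the empty word. Hence the two contractions `x ⊗ y ↦ ε(x) y` and
`x ⊗ y ↦ ε(y) x` turn the componentwise product on `kX_∞ ⊗ kX_∞` into `⋄`, commute with
`id ⊗ P` (resp. kill it, as `ε ∘ P = 0`), and an induction on the degree along the recursive
definition of `Δ` shows that both are left inverse to `Δ`. -/

section CounitContraction

variable {R : Type*} {M : Type*} [CommSemiring R] [AddCommMonoid M] [Module R M]

noncomputable def leftCounitMap (ε : M →ₗ[R] R) : M ⊗[R] M →ₗ[R] M :=
  (TensorProduct.lid R M).toLinearMap ∘ₗ TensorProduct.map ε LinearMap.id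

noncomputable def rightCounitMap (ε : M →ₗ[R] R) : M ⊗[R] M →ₗ[R] M :=
  (TensorProduct.rid R M).toLinearMap ∘ₗ TensorProduct.map LinearMap.id ε

variable (ε : M →ₗ[R] R)

@[simp] lemma leftCounitMap_tmul (x y : M) : leftCounitMap ε (x ⊗ₜ y) = ε x • y := by
  simp [leftCounitMap]

@[simp] lemma rightCounitMap_tmul (x y : M) : rightCounitMap ε (x ⊗ₜ y) = ε y • x := by
  simp [rightCounitMap]

lemma leftCounitMap_map_id (f : M →ₗ[R] M) (z : M ⊗[R] M) :
    leftCounitMap ε (TensorProduct.map LinearMap.id f z) = f (leftCounitMap ε z) := by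
  induction z using TensorProduct.induction_on with
  | zero => simp
  | tmul x y => simp
  | add z₁ z₂ ih₁ ih₂ => simp only [map_add, ih₁, ih₂]

lemma rightCounitMap_map_id_of_comp_eq_zero {f : M →ₗ[R] M} (hf : ε ∘ₗ f = 0)
    (z : M ⊗[R] M) : rightCounitMap ε (TensorProduct.map LinearMap.id f z) = 0 := by
  induction z using TensorProduct.induction_on with
  | zero => simp
  | tmul x y => simp [← LinearMap.comp_apply ε f, hf]
  | add z₁ z₂ ih₁ ih₂ => simp only [map_add, ih₁, ih₂, add_zero]

variable {ε} {μ : M →ₗ[R] M →ₗ[R] M}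

lemma leftCounitMap_map₂ (hε : ∀ x y, ε (μ x y) = ε x * ε y) (s t : M ⊗[R] M) :
    leftCounitMap ε (TensorProduct.map₂ μ μ s t)
      = μ (leftCounitMap ε s) (leftCounitMap ε t) := by
  induction s using TensorProduct.induction_on with
  | zero => simp
  | add s₁ s₂ ih₁ ih₂ => simp only [map_add, LinearMap.add_apply, ih₁, ih₂]
  | tmul x y =>
    induction t using TensorProduct.induction_on with
    | zero => simp
    | add t₁ t₂ ih₁ ih₂ => simp only [map_add, ih₁, ih₂]
    | tmul x' y' => simp [hε, mul_smul, smul_comm (ε x)]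

lemma rightCounitMap_map₂ (hε : ∀ x y, ε (μ x y) = ε x * ε y) (s t : M ⊗[R] M) :
    rightCounitMap ε (TensorProduct.map₂ μ μ s t)
      = μ (rightCounitMap ε s) (rightCounitMap ε t) := by
  induction s using TensorProduct.induction_on with
  | zero => simp
  | add s₁ s₂ ih₁ ih₂ => simp only [map_add, LinearMap.add_apply, ih₁, ih₂]
  | tmul x y =>
    induction t using TensorProduct.induction_on with
    | zero => simp
    | add t₁ t₂ ih₁ ih₂ => simp only [map_add, ih₁, ih₂]
    | tmul x' y' => simp [hε, mul_smul, smul_comm (ε y)]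

end CounitContraction

namespace RBL

variable {X : Type u}

lemma degL_pos (a : RBL X) : 0 < degL a := by
  cases a <;> simp [degL]

lemma degW_pos {l : List (RBL X)} (h : l ≠ []) : 0 < degW l := by
  obtain ⟨a, l, rfl⟩ := List.exists_cons_of_ne_nil h
  exact Nat.lt_add_right _ (degL_pos a)

lemma valid_of_wordValid_cons {a : RBL X} {l : List (RBL X)} (h : wordValid (a :: l)) :
    valid a := by
  cases l with
  | nil => exact h
  | cons b t => exact h.1

lemma wordValid_append_or {l₁ l₂ : List (RBL X)} (h₁ : wordValid l₁) (h₂ : wordValid l₂) :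
    wordValid (l₁ ++ l₂) ∨ ∃ u₀ v₀ a b : List (RBL X), wordValid a ∧ wordValid b ∧
      l₁ = u₀ ++ [br a] ∧ l₂ = br b :: v₀ := by
  induction l₁ with
  | nil => exact Or.inl h₂
  | cons c t ih =>
    cases t with
    | nil =>
      cases l₂ with
      | nil => exact Or.inl h₁
      | cons d t₂ =>
        by_cases hcd : c.isBr = true ∧ d.isBr = true
        · obtain ⟨hc, hd⟩ := hcd
          cases c with
          | var _ => simp [isBr] at hc
          | br a =>
            cases d with
            | var _ => simp [isBr] at hd
            | br b => exact Or.inr ⟨[], t₂, a, b, h₁, valid_of_wordValid_cons h₂, rfl, rfl⟩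
        · exact Or.inl ⟨h₁, hcd, h₂⟩
    | cons c' t' =>
      rcases ih h₁.2.2 with h | ⟨u₀, v₀, a, b, ha, hb, hu, hv⟩
      · exact Or.inl ⟨h₁.1, h₁.2.1, h⟩
      · exact Or.inr ⟨c :: u₀, v₀, a, b, ha, hb, by rw [hu, List.cons_append], hv⟩

end RBL

namespace RBWord

variable {X : Type u}

open RBL in
theorem induction {motive : RBWord X → Prop} (one : motive RBWord.one)
    (var : ∀ x, motive ⟨[RBL.var x], wordValid_var x⟩)
    (br : ∀ w : RBWord X, motive w → motive ⟨[RBL.br w.1], wordValid_br w.2⟩)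
    (cons : ∀ a l (h : wordValid (a :: l)) (ha : wordValid [a]) (hl : wordValid l), l ≠ [] →
      motive ⟨[a], ha⟩ → motive ⟨l, hl⟩ → motive ⟨a :: l, h⟩)
    (w : RBWord X) : motive w := by
  suffices ∀ n (w : RBWord X), w.deg = n → motive w from this _ w rfl
  intro n
  induction n using Nat.strong_induction_on with
  | _ n ih =>
  rintro ⟨_ | ⟨a, _ | ⟨b, l⟩⟩, h⟩ rfl
  · exact one
  · cases a with
    | var x => exact var x
    | br l => exact br ⟨l, h⟩ (ih _ (by simp [deg, degW, degL]) _ rfl)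
  · have hdeg_a : 0 < degL a := degL_pos a
    have hdeg_bl : 0 < degW (b :: l) := degW_pos (List.cons_ne_nil b l)
    exact cons a (b :: l) h (valid_of_wordValid_cons h) h.2.2 (List.cons_ne_nil b l)
      (ih _ (by simp only [deg, degW] at hdeg_bl ⊢; omega) _ rfl)
      (ih _ (by simp only [deg, degW] at hdeg_bl ⊢; omega) _ rfl)

end RBWord

section Counit

variable {k : Type v} [CommRing k] {X : Type u}

@[simp] lemma eps_sing_one : eps k X (sing k RBWord.one) = 1 :=
  Finsupp.single_eq_same

lemma eps_sing_of_ne_nil {w : RBWord X} (h : w.1 ≠ []) : eps k X (sing k w) = 0 :=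
  Finsupp.single_eq_of_ne fun e => h (congrArg Subtype.val e).symm

lemma Pop_sing (w : RBWord X) :
    Pop k X (sing k w) = sing k ⟨[RBL.br w.1], RBL.wordValid_br w.2⟩ :=
  Finsupp.mapDomain_single

lemma eps_comp_Pop : eps k X ∘ₗ Pop k X = 0 := by
  ext w : 2
  change eps k X (Pop k X (sing k w)) = 0
  rw [Pop_sing]
  exact eps_sing_of_ne_nil (List.cons_ne_nil _ _)

lemma eps_Pop (m : RBMod k X) : eps k X (Pop k X m) = 0 :=
  LinearMap.congr_fun eps_comp_Pop m

lemma eps_concatLR_sing_of_ne_nil (u₀ v₀ : List (RBL X)) {w : RBWord X} (hw : w.1 ≠ []) :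
    eps k X (concatLR k X u₀ v₀ (sing k w)) = 0 := by
  simp only [concatLR, sing, Finsupp.lsum_single]
  split_ifs
  · exact eps_sing_of_ne_nil (by simp [hw])
  · exact map_zero _

lemma eps_concatLR_Pop (u₀ v₀ : List (RBL X)) (m : RBMod k X) :
    eps k X (concatLR k X u₀ v₀ (Pop k X m)) = 0 := by
  suffices eps k X ∘ₗ concatLR k X u₀ v₀ ∘ₗ Pop k X = 0 from LinearMap.congr_fun this m
  ext w : 2
  change eps k X (concatLR k X u₀ v₀ (Pop k X (sing k w))) = 0
  rw [Pop_sing]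
  exact eps_concatLR_sing_of_ne_nil u₀ v₀ (List.cons_ne_nil _ _)

end Counit

namespace FreeRBAData

variable {k : Type v} [CommRing k] {X : Type u} {lam : k} (D : FreeRBAData k X lam)

lemma d_sing_one_left (v : RBWord X) : D.d (sing k RBWord.one) (sing k v) = sing k v :=
  D.d_concat RBWord.one v v.2

lemma d_sing_one_right (u : RBWord X) : D.d (sing k u) (sing k RBWord.one) = sing k u := by
  rw [D.d_concat u RBWord.one (by simpa [RBWord.one] using u.2)]
  exact congrArg (sing k) (Subtype.ext (List.append_nil _))

lemma eps_d_sing (u v : RBWord X) :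
    eps k X (D.d (sing k u) (sing k v)) = eps k X (sing k u) * eps k X (sing k v) := by
  rcases eq_or_ne u.1 [] with hu | hu
  · rw [show u = RBWord.one from Subtype.ext hu, d_sing_one_left, eps_sing_one, one_mul]
  rcases eq_or_ne v.1 [] with hv | hv
  · rw [show v = RBWord.one from Subtype.ext hv, d_sing_one_right, eps_sing_one, mul_one]
  rw [eps_sing_of_ne_nil hu, zero_mul]
  rcases RBL.wordValid_append_or u.2 v.2 with h | ⟨u₀, v₀, a, b, ha, hb, hu', hv'⟩
  · rw [D.d_concat u v h]
    exact eps_sing_of_ne_nil (by simp [hu])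
  · obtain ⟨hu₀, hv₀⟩ : RBL.wordValid (u₀ ++ [RBL.br a]) ∧ RBL.wordValid (RBL.br b :: v₀) :=
      ⟨hu' ▸ u.2, hv' ▸ v.2⟩
    rw [show u = ⟨_, hu₀⟩ from Subtype.ext hu', show v = ⟨_, hv₀⟩ from Subtype.ext hv',
      D.d_br u₀ v₀ ⟨a, ha⟩ ⟨b, hb⟩]
    simp only [map_add, map_smul, eps_concatLR_Pop, smul_zero, add_zero]

lemma eps_d (u v : RBMod k X) : eps k X (D.d u v) = eps k X u * eps k X v := by
  have h : D.d.compr₂ (eps k X) = (LinearMap.mul k k).compl₁₂ (eps k X) (eps k X) := by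
    ext u v
    exact D.eps_d_sing u v
  exact LinearMap.congr_fun₂ h u v

end FreeRBAData

namespace FreeRBBialgData

variable {k : Type v} [CommRing k] {X : Type u} {lam : k} (D : FreeRBBialgData k X lam)

lemma leftCounitMap_Dl_sing (w : RBWord X) :
    leftCounitMap (eps k X) (D.Dl (sing k w)) = sing k w := by
  induction w using RBWord.induction with
  | one => simp [D.Dl_one]
  | var x =>
    have hx : eps k X (sing k ⟨[RBL.var x], RBL.wordValid_var x⟩) = 0 :=
      eps_sing_of_ne_nil (List.cons_ne_nil _ _)
    simp [D.Dl_var, hx]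
  | br w ih =>
    rw [← Pop_sing, D.Dl_br, map_add, leftCounitMap_tmul, leftCounitMap_map_id, ih,
      eps_Pop, zero_smul, zero_add]
  | cons a l h ha hl hne iha ihl =>
    rw [D.Dl_cons a l h ha hl hne, leftCounitMap_map₂ D.eps_d, iha, ihl]
    exact D.d_concat ⟨[a], ha⟩ ⟨l, hl⟩ h

lemma rightCounitMap_Dl_sing (w : RBWord X) :
    rightCounitMap (eps k X) (D.Dl (sing k w)) = sing k w := by
  induction w using RBWord.induction with
  | one => simp [D.Dl_one]
  | var x =>
    have hx : eps k X (sing k ⟨[RBL.var x], RBL.wordValid_var x⟩) = 0 :=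
      eps_sing_of_ne_nil (List.cons_ne_nil _ _)
    simp [D.Dl_var, hx]
  | br w ih =>
    rw [← Pop_sing, D.Dl_br, map_add, rightCounitMap_tmul,
      rightCounitMap_map_id_of_comp_eq_zero _ eps_comp_Pop, eps_sing_one, one_smul, add_zero]
  | cons a l h ha hl hne iha ihl =>
    rw [D.Dl_cons a l h ha hl hne, rightCounitMap_map₂ D.eps_d, iha, ihl]
    exact D.d_concat ⟨[a], ha⟩ ⟨l, hl⟩ h

lemma leftCounitMap_comp_Dl : leftCounitMap (eps k X) ∘ₗ D.Dl = LinearMap.id := by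
  ext w : 2
  exact D.leftCounitMap_Dl_sing w

lemma rightCounitMap_comp_Dl : rightCounitMap (eps k X) ∘ₗ D.Dl = LinearMap.id := by
  ext w : 2
  exact D.rightCounitMap_Dl_sing w

end FreeRBBialgData

/-- `ε` is a counit for `Δ` on `kX_∞`: for every `w ∈ kX_∞`,
`(ε ⊗ id)Δ(w) = 1_k ⊗ w` in `k ⊗ kX_∞` and `(id ⊗ ε)Δ(w) = w ⊗ 1_k` in `kX_∞ ⊗ k`. -/
theorem counit_property
    {k : Type v} [CommRing k] {X : Type u} {lam : k} (D : FreeRBBialgData k X lam)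
    (w : RBMod k X) :
    TensorProduct.map (eps k X) LinearMap.id (D.Dl w) = (1 : k) ⊗ₜ[k] w ∧
    TensorProduct.map LinearMap.id (eps k X) (D.Dl w) = w ⊗ₜ[k] (1 : k) := by
  constructor
  · apply (TensorProduct.lid k (RBMod k X)).injective
    simpa [leftCounitMap] using LinearMap.congr_fun D.leftCounitMap_comp_Dl w
  · apply (TensorProduct.rid k (RBMod k X)).injective
    simpa [rightCounitMap] using LinearMap.congr_fun D.rightCounitMap_comp_Dl w
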